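/- Let C be a (k,r,h) data-local maximally recoverable code with ℓ = k/r local groups, with local group supports S_1, ..., S_ℓ. For any subset U of {1,...,n}, let b(U) = #{i : S_i ⊆ U}. Then ρ(U) = min(|U| - b(U), k). -/

import Mathlib

open Finset

/-- Coordinate index set of a `(k,r,h)` data-local code with `ℓ = k/r` local groups
(see stmt 3). -/
abbrev DLIdx (ℓ r h : ℕ) : Type := (Fin ℓ × Fin r) ⊕ (Fin ℓ ⊕ Fin h)

/-- The support `S_i` of the `i`-th local group. -/
def dlGroup (ℓ r h : ℕ) (i : Fin ℓ) : Finset (DLIdx ℓ r h) :=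
  insert (Sum.inr (Sum.inl i))
    ((Finset.univ : Finset (Fin r)).image fun j => Sum.inl (i, j))

/-- `ρ(U)`: the dimension of the projection of the code `C` onto the coordinates in `U`. -/
noncomputable def dlRho (ℓ r h : ℕ) (F : Type) [Field F]
    (C : Submodule F (DLIdx ℓ r h → F)) (U : Finset (DLIdx ℓ r h)) : ℕ :=
  Module.finrank F (C.map (LinearMap.funLeft F F (Subtype.val : ↥U → DLIdx ℓ r h)))

/-!
The local parity of a group lying entirely in `U` is a combination of that group's data
symbols, so removing these `b(U)` parities from `U` does not change `ρ`. The remaining set `U'`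
meets every local group in at most `r` coordinates, so it extends to a set `E` as in the
maximal-recoverability condition, and `C|_E` is MDS of dimension `k`: a codeword vanishing on
`k` coordinates of `E` vanishes on `E`, so any `k` coordinates of `E` are an information set and
`ρ(U') = min(|U'|, k)`.
-/

open Module

theorem hammingNorm_le_card_sub_of_eq_zero {κ β : Type*} [Fintype κ] [Zero β] [DecidableEq β]
    (y : κ → β) (s : Finset κ) (hs : ∀ x ∈ s, y x = 0) :
    hammingNorm y ≤ Fintype.card κ - s.card := by
  classical
  rw [← card_compl]
  exact card_le_card fun x hx => mem_compl.2 fun hxs => (mem_filter.1 hx).2 (hs x hxs)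

section Puncture

variable {ι F : Type*} [Field F]

def puncture (C : Submodule F (ι → F)) (U : Finset ι) : Submodule F (U → F) :=
  C.map (LinearMap.funLeft F F Subtype.val)

variable (C : Submodule F (ι → F))

theorem finrank_puncture_le_card (U : Finset ι) : finrank F (puncture C U) ≤ U.card := by
  simpa using Submodule.finrank_le (puncture C U)

theorem puncture_eq_map_of_subset {T U : Finset ι} (hTU : T ⊆ U) :
    puncture C T =
      (puncture C U).map (LinearMap.funLeft F F fun t : T => (⟨t.1, hTU t.2⟩ : U)) := by
  rw [puncture, puncture, ← Submodule.map_comp, ← LinearMap.funLeft_comp]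
  rfl

theorem finrank_puncture_eq_card_of_subset {T U : Finset ι} (hTU : T ⊆ U)
    (hU : finrank F (puncture C U) = U.card) : finrank F (puncture C T) = T.card := by
  have htop : puncture C U = ⊤ :=
    Submodule.eq_top_of_finrank_eq (by rw [hU, finrank_fintype_fun_eq_card, Fintype.card_coe])
  rw [puncture_eq_map_of_subset C hTU, htop, Submodule.map_top,
    LinearMap.range_eq_top.2 (LinearMap.funLeft_surjective_of_injective F F
      (fun t : T => (⟨t.1, hTU t.2⟩ : U)) fun _ _ h => Subtype.ext (Subtype.mk.inj h)),
    finrank_top, finrank_fintype_fun_eq_card, Fintype.card_coe]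

theorem finrank_eq_card_of_existsUnique {κ : Type*} [Fintype κ] {C : Submodule F (ι → F)}
    (f : κ → ι) (h : ∀ x : κ → F, ∃! c : ι → F, c ∈ C ∧ ∀ p, c (f p) = x p) :
    finrank F C = Fintype.card κ := by
  have hbij : Function.Bijective ((LinearMap.funLeft F F f).comp C.subtype) := by
    refine ⟨fun c₁ c₂ hc => ?_, fun x => ?_⟩
    · obtain ⟨c, -, huniq⟩ := h fun p => c₁.1 (f p)
      exact Subtype.ext <| (huniq c₁ ⟨c₁.2, fun _ => rfl⟩).trans
        (huniq c₂ ⟨c₂.2, fun p => (congrFun hc p).symm⟩).symm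
    · obtain ⟨c, ⟨hc, hcx⟩, -⟩ := h x
      exact ⟨⟨c, hc⟩, funext hcx⟩
  rw [(LinearEquiv.ofBijective _ hbij).finrank_eq, finrank_fintype_fun_eq_card]

variable [Finite ι]

theorem finrank_puncture_le (U : Finset ι) : finrank F (puncture C U) ≤ finrank F C :=
  Submodule.finrank_map_le _ _

theorem finrank_puncture_le_of_eq_zero {T U : Finset ι}
    (h : ∀ c ∈ C, (∀ x ∈ T, c x = 0) → ∀ x ∈ U, c x = 0) :
    finrank F (puncture C U) ≤ finrank F (puncture C T) := by
  let restrict (S : Finset ι) : C →ₗ[F] (S → F) :=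
    (LinearMap.funLeft F F Subtype.val).comp C.subtype
  have hrange (S : Finset ι) : LinearMap.range (restrict S) = puncture C S := by
    rw [LinearMap.range_comp, Submodule.range_subtype]; rfl
  have hker : LinearMap.ker (restrict T) ≤ LinearMap.ker (restrict U) := by
    intro c hc
    have hcT : ∀ x ∈ T, (c : ι → F) x = 0 := fun x hx => congrFun hc ⟨x, hx⟩
    exact funext fun x => h c c.2 hcT x x.2
  have hT := (restrict T).finrank_range_add_finrank_ker
  have hU := (restrict U).finrank_range_add_finrank_ker
  have := Submodule.finrank_mono hker
  rw [hrange] at hT hU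
  omega

theorem finrank_puncture_mono {T U : Finset ι} (hTU : T ⊆ U) :
    finrank F (puncture C T) ≤ finrank F (puncture C U) :=
  finrank_puncture_le_of_eq_zero C fun _ _ hc x hx => hc x (hTU hx)

-- A codeword vanishing on `T` has weight at most `|E| - |T| < d` on `E`, so it vanishes on `E`.
theorem finrank_puncture_eq_of_le_card [DecidableEq F] {E : Finset ι}
    (hrank : finrank F (puncture C E) = finrank F C)
    (hdist : ∀ y ∈ puncture C E, y ≠ 0 → E.card - finrank F C + 1 ≤ hammingNorm y)
    {T : Finset ι} (hTE : T ⊆ E) (hT : finrank F C ≤ T.card) :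
    finrank F (puncture C T) = finrank F C := by
  classical
  refine le_antisymm (finrank_puncture_le C T) (hrank ▸ finrank_puncture_le_of_eq_zero C ?_)
  intro c hc hcT
  have hzero : (fun x : E => c x) = 0 := by
    by_contra hne
    have hweight := hammingNorm_le_card_sub_of_eq_zero (fun x : E => c x) (T.subtype (· ∈ E))
      fun x hx => hcT x (by simpa using hx)
    rw [Fintype.card_coe, card_subtype, filter_true_of_mem hTE] at hweight
    have := hdist (fun x : E => c x) (Submodule.mem_map_of_mem hc) hne
    omega
  exact fun x hx => congrFun hzero ⟨x, hx⟩

theorem finrank_puncture_eq_min [DecidableEq F] {E : Finset ι}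
    (hrank : finrank F (puncture C E) = finrank F C)
    (hdist : ∀ y ∈ puncture C E, y ≠ 0 → E.card - finrank F C + 1 ≤ hammingNorm y)
    {T : Finset ι} (hTE : T ⊆ E) : finrank F (puncture C T) = min T.card (finrank F C) := by
  rcases le_total (finrank F C) T.card with hT | hT
  · rw [finrank_puncture_eq_of_le_card C hrank hdist hTE hT, min_eq_right hT]
  · obtain ⟨T', hTT', hT'E, hT'⟩ := exists_subsuperset_card_eq hTE hT
      (hrank ▸ finrank_puncture_le_card C E)
    rw [min_eq_left hT]
    exact finrank_puncture_eq_card_of_subset C hTT'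
      ((finrank_puncture_eq_of_le_card C hrank hdist hT'E hT'.ge).trans hT'.symm)

end Puncture

section DataLocal

variable {ℓ r h : ℕ}

theorem mem_dlGroup {i : Fin ℓ} {x : DLIdx ℓ r h} :
    x ∈ dlGroup ℓ r h i ↔ x = Sum.inr (Sum.inl i) ∨ ∃ j, x = Sum.inl (i, j) := by
  simp [dlGroup, eq_comm]

theorem parity_mem_dlGroup (i : Fin ℓ) : Sum.inr (Sum.inl i) ∈ dlGroup ℓ r h i :=
  mem_dlGroup.2 (Or.inl rfl)

theorem card_dlGroup (i : Fin ℓ) : (dlGroup ℓ r h i).card = r + 1 := by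
  rw [dlGroup, card_insert_of_notMem (by simp),
    card_image_of_injective _ fun _ _ hj => by simpa using hj, card_univ, Fintype.card_fin]

theorem disjoint_dlGroup {i j : Fin ℓ} (hij : i ≠ j) :
    Disjoint (dlGroup ℓ r h i) (dlGroup ℓ r h j) := by
  simp [disjoint_left, mem_dlGroup, hij]

variable (ℓ r h) in
def dlGlobals : Finset (DLIdx ℓ r h) :=
  univ.image fun g => Sum.inr (Sum.inr g)

theorem card_dlGlobals : (dlGlobals ℓ r h).card = h := by
  rw [dlGlobals, card_image_of_injective _ fun _ _ hg => by simpa using hg, card_univ,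
    Fintype.card_fin]

theorem disjoint_dlGlobals_dlGroup (i : Fin ℓ) :
    Disjoint (dlGlobals ℓ r h) (dlGroup ℓ r h i) := by
  simp [disjoint_left, dlGlobals, mem_dlGroup]

theorem mem_dlGlobals_or_exists_mem_dlGroup (x : DLIdx ℓ r h) :
    x ∈ dlGlobals ℓ r h ∨ ∃ i, x ∈ dlGroup ℓ r h i := by
  rcases x with ⟨i, j⟩ | i | g <;> simp [dlGlobals, mem_dlGroup]

theorem card_inter_dlGroup_le_of_not_subset {T : Finset (DLIdx ℓ r h)} {i : Fin ℓ}
    (hT : ¬ dlGroup ℓ r h i ⊆ T) : (T ∩ dlGroup ℓ r h i).card ≤ r := by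
  have := card_lt_card (ssubset_of_subset_of_ne inter_subset_right (mt inter_eq_right.1 hT))
  rw [card_dlGroup] at this
  omega

theorem exists_superset_card_inter_dlGroup_eq (T : Finset (DLIdx ℓ r h))
    (hT : ∀ i, (T ∩ dlGroup ℓ r h i).card ≤ r) :
    ∃ E, T ⊆ E ∧ E.card = ℓ * r + h ∧ ∀ i, (E ∩ dlGroup ℓ r h i).card = r := by
  choose G hTG hGS hGcard using fun i =>
    exists_subsuperset_card_eq inter_subset_right (hT i) (by rw [card_dlGroup]; omega)
  have hGdisj : Set.PairwiseDisjoint ↑(univ : Finset (Fin ℓ)) G :=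
    fun i _ j _ hij => (disjoint_dlGroup hij).mono (hGS i) (hGS j)
  have hEG (i : Fin ℓ) : (dlGlobals ℓ r h ∪ univ.biUnion G) ∩ dlGroup ℓ r h i = G i := by
    refine Subset.antisymm (fun x hx => ?_) fun x hx =>
      mem_inter.2 ⟨mem_union_right _ (mem_biUnion.2 ⟨i, mem_univ i, hx⟩), hGS i hx⟩
    obtain ⟨hxE, hxS⟩ := mem_inter.1 hx
    rcases mem_union.1 hxE with hg | hb
    · exact absurd hxS (disjoint_left.1 (disjoint_dlGlobals_dlGroup i) hg)
    · obtain ⟨j, -, hj⟩ := mem_biUnion.1 hb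
      obtain rfl : j = i := by
        by_contra hne
        exact disjoint_left.1 (disjoint_dlGroup hne) (hGS j hj) hxS
      exact hj
  refine ⟨dlGlobals ℓ r h ∪ univ.biUnion G, fun x hx => ?_, ?_, fun i => by rw [hEG, hGcard]⟩
  · rcases mem_dlGlobals_or_exists_mem_dlGroup x with hg | ⟨i, hi⟩
    · exact mem_union_left _ hg
    · exact mem_union_right _ (mem_biUnion.2 ⟨i, mem_univ i, hTG i (mem_inter.2 ⟨hx, hi⟩)⟩)
  · rw [card_union_of_disjoint ((disjoint_biUnion_right _ _ _).2 fun i _ =>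
      (disjoint_dlGlobals_dlGroup i).mono_right (hGS i)), card_biUnion hGdisj, card_dlGlobals]
    simp [hGcard, add_comm]

theorem card_sdiff_parities {U : Finset (DLIdx ℓ r h)} {B : Finset (Fin ℓ)}
    (hB : ∀ i ∈ B, dlGroup ℓ r h i ⊆ U) :
    (U \ B.image fun i => Sum.inr (Sum.inl i)).card = U.card - B.card := by
  rw [card_sdiff_of_subset (image_subset_iff.2 fun i hi => hB i hi (parity_mem_dlGroup i)),
    card_image_of_injective _ fun _ _ hi => by simpa using hi]

theorem not_dlGroup_subset_sdiff_parities (U : Finset (DLIdx ℓ r h)) (i : Fin ℓ) :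
    ¬ dlGroup ℓ r h i ⊆
      U \ (univ.filter fun i => dlGroup ℓ r h i ⊆ U).image fun i => Sum.inr (Sum.inl i) := by
  intro hsub
  have hU : dlGroup ℓ r h i ⊆ U := hsub.trans sdiff_subset
  exact (mem_sdiff.1 (hsub (parity_mem_dlGroup i))).2 (mem_image_of_mem _ (by simpa using hU))

variable {F : Type} [Field F] (C : Submodule F (DLIdx ℓ r h → F))

theorem dlRho_eq_finrank_puncture (U : Finset (DLIdx ℓ r h)) :
    dlRho ℓ r h F C U = finrank F (puncture C U) := rfl

theorem dlRho_eq_min_of_card_inter_dlGroup_le [DecidableEq F] (hdimC : finrank F C = ℓ * r)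
    (hmrc : ∀ E : Finset (DLIdx ℓ r h), E.card = ℓ * r + h →
      (∀ i : Fin ℓ, (E ∩ dlGroup ℓ r h i).card = r) →
      finrank F (C.map (LinearMap.funLeft F F (Subtype.val : ↥E → DLIdx ℓ r h))) = ℓ * r ∧
      ∀ y ∈ C.map (LinearMap.funLeft F F (Subtype.val : ↥E → DLIdx ℓ r h)),
        y ≠ 0 → h + 1 ≤ hammingNorm y)
    {T : Finset (DLIdx ℓ r h)} (hT : ∀ i, (T ∩ dlGroup ℓ r h i).card ≤ r) :
    dlRho ℓ r h F C T = min T.card (ℓ * r) := by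
  obtain ⟨E, hTE, hEcard, hEgroups⟩ := exists_superset_card_inter_dlGroup_eq T hT
  obtain ⟨hrank, hdist⟩ := hmrc E hEcard hEgroups
  rw [dlRho_eq_finrank_puncture, ← hdimC]
  refine finrank_puncture_eq_min C (hrank.trans hdimC.symm) (fun y hy hy0 => ?_) hTE
  rw [hEcard, hdimC, Nat.add_sub_cancel_left]
  exact hdist y hy hy0

theorem dlRho_sdiff_parities (a : Fin ℓ → Fin r → F)
    (hloc : ∀ c ∈ C, ∀ i : Fin ℓ,
      c (Sum.inr (Sum.inl i)) = ∑ j : Fin r, a i j * c (Sum.inl (i, j)))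
    {U : Finset (DLIdx ℓ r h)} {B : Finset (Fin ℓ)} (hB : ∀ i ∈ B, dlGroup ℓ r h i ⊆ U) :
    dlRho ℓ r h F C (U \ B.image fun i => Sum.inr (Sum.inl i)) = dlRho ℓ r h F C U := by
  refine le_antisymm (finrank_puncture_mono C sdiff_subset)
    (finrank_puncture_le_of_eq_zero C fun c hc hc0 x hx => ?_)
  by_cases hxB : x ∈ B.image fun i => Sum.inr (Sum.inl i)
  · obtain ⟨i, hi, rfl⟩ := mem_image.1 hxB
    rw [hloc c hc i]
    refine sum_eq_zero fun j _ => ?_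
    rw [hc0 _ (mem_sdiff.2 ⟨hB i hi (mem_dlGroup.2 (Or.inr ⟨j, rfl⟩)), by simp⟩), mul_zero]
  · exact hc0 x (mem_sdiff.2 ⟨hx, hxB⟩)

end DataLocal

theorem stmt_6_general (ℓ r h : ℕ)
    (F : Type) [Field F] [DecidableEq F]
    (C : Submodule F (DLIdx ℓ r h → F))
    (hsys : ∀ x : Fin ℓ × Fin r → F, ∃! c : DLIdx ℓ r h → F,
      c ∈ C ∧ ∀ p, c (Sum.inl p) = x p)
    (a : Fin ℓ → Fin r → F)
    (hloc : ∀ c ∈ C, ∀ i : Fin ℓ,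
      c (Sum.inr (Sum.inl i)) = ∑ j : Fin r, a i j * c (Sum.inl (i, j)))
    (hmrc : ∀ E : Finset (DLIdx ℓ r h), E.card = ℓ * r + h →
      (∀ i : Fin ℓ, (E ∩ dlGroup ℓ r h i).card = r) →
      Module.finrank F
          (C.map (LinearMap.funLeft F F (Subtype.val : ↥E → DLIdx ℓ r h))) = ℓ * r ∧
      ∀ y ∈ C.map (LinearMap.funLeft F F (Subtype.val : ↥E → DLIdx ℓ r h)),
        y ≠ 0 → h + 1 ≤ hammingNorm y) :
    ∀ U : Finset (DLIdx ℓ r h),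
      dlRho ℓ r h F C U =
        min (U.card - (Finset.univ.filter fun i : Fin ℓ => dlGroup ℓ r h i ⊆ U).card)
          (ℓ * r) := by
  intro U
  have hdimC : finrank F C = ℓ * r := by
    simpa using finrank_eq_card_of_existsUnique Sum.inl hsys
  have hB : ∀ i ∈ univ.filter fun i => dlGroup ℓ r h i ⊆ U, dlGroup ℓ r h i ⊆ U :=
    fun i hi => (mem_filter.1 hi).2
  rw [← dlRho_sdiff_parities C a hloc hB, ← card_sdiff_parities hB]
  exact dlRho_eq_min_of_card_inter_dlGroup_le C hdimC hmrc fun i =>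
    card_inter_dlGroup_le_of_not_subset (not_dlGroup_subset_sdiff_parities U i)

/-- for a `(k,r,h)` data-local MRC with `ℓ = k/r` local groups, and any
`U ⊆ [n]`, letting `b(U) = #{i : S_i ⊆ U}`, one has `ρ(U) = min(|U| - b(U), k)`. -/
theorem stmt_6 (ℓ r h : ℕ) (hr : 0 < r) (hℓ : 0 < ℓ)
    (F : Type) [Field F] [Fintype F] [DecidableEq F]
    (C : Submodule F (DLIdx ℓ r h → F))
    (hsys : ∀ x : Fin ℓ × Fin r → F, ∃! c : DLIdx ℓ r h → F,
      c ∈ C ∧ ∀ p, c (Sum.inl p) = x p)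
    (a : Fin ℓ → Fin r → F) (ha : ∀ i j, a i j ≠ 0)
    (hloc : ∀ c ∈ C, ∀ i : Fin ℓ,
      c (Sum.inr (Sum.inl i)) = ∑ j : Fin r, a i j * c (Sum.inl (i, j)))
    (hmrc : ∀ E : Finset (DLIdx ℓ r h), E.card = ℓ * r + h →
      (∀ i : Fin ℓ, (E ∩ dlGroup ℓ r h i).card = r) →
      Module.finrank F
          (C.map (LinearMap.funLeft F F (Subtype.val : ↥E → DLIdx ℓ r h))) = ℓ * r ∧
      ∀ y ∈ C.map (LinearMap.funLeft F F (Subtype.val : ↥E → DLIdx ℓ r h)),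
        y ≠ 0 → h + 1 ≤ hammingNorm y) :
    ∀ U : Finset (DLIdx ℓ r h),
      dlRho ℓ r h F C U =
        min (U.card - (Finset.univ.filter fun i : Fin ℓ => dlGroup ℓ r h i ⊆ U).card)
          (ℓ * r) :=
  stmt_6_general ℓ r h F C hsys a hloc hmrc
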